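/- If a continuously differentiable function V : [t0, ∞) → ℝ satisfies V(t) ≥ 0 and V'(t) ≤ -β·V(t) + ϖ·exp(-2α(t - t0)) for constants β > 0, α > 0, ϖ ≥ 0 with β ≠ 2α, then V(t) ≤ V(t0)·exp(-β(t - t0)) + (ϖ/|β - 2α|)·exp(-c(t - t0)) where c = min(2α, β). -/

import Mathlib

/-!
Comparison with the explicit solution `B` of `B' = -β B + ϖ e^{-γ (t - t₀)}`, `B t₀ = V t₀`:
the difference `D = V - B` satisfies `D' ≤ -β D`, so `D e^{β (t - t₀)}` is antitone and `V ≤ B`.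
The forced part of `B` is `ϖ (e^{-γ τ} - e^{-β τ}) / (β - γ)`, which is symmetric in `β, γ` and
hence bounded by `ϖ e^{-min(γ, β) τ} / |β - γ|`.
-/

open Real Set

noncomputable def forcedDecaySolution (β γ ϖ t₀ v₀ t : ℝ) : ℝ :=
  v₀ * exp (-β * (t - t₀)) + ϖ / (β - γ) * (exp (-γ * (t - t₀)) - exp (-β * (t - t₀)))

lemma hasDerivAt_forcedDecaySolution {β γ : ℝ} (hγβ : γ ≠ β) (ϖ t₀ v₀ t : ℝ) :
    HasDerivAt (forcedDecaySolution β γ ϖ t₀ v₀)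
      (-β * forcedDecaySolution β γ ϖ t₀ v₀ t + ϖ * exp (-γ * (t - t₀))) t := by
  have hexp : ∀ c : ℝ, HasDerivAt (fun s ↦ exp (c * (s - t₀))) (exp (c * (t - t₀)) * c) t :=
    fun c ↦ (((hasDerivAt_id t).sub_const t₀).const_mul c).exp.congr_deriv (by simp)
  have hβγ : β - γ ≠ 0 := sub_ne_zero.mpr hγβ.symm
  refine ((hexp (-β)).const_mul v₀ |>.add
    (((hexp (-γ)).sub (hexp (-β))).const_mul (ϖ / (β - γ)))).congr_deriv ?_
  unfold forcedDecaySolution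
  field_simp
  ring

lemma le_mul_exp_of_hasDerivAt_le {D D' : ℝ → ℝ} {β t₀ : ℝ}
    (hD : ∀ t, t₀ ≤ t → HasDerivAt D (D' t) t) (hD' : ∀ t, t₀ ≤ t → D' t ≤ -β * D t)
    {t : ℝ} (ht : t₀ ≤ t) : D t ≤ D t₀ * exp (-β * (t - t₀)) := by
  set W : ℝ → ℝ := fun s ↦ D s * exp (β * (s - t₀))
  have hW : ∀ s, t₀ ≤ s → HasDerivAt W ((D' s + β * D s) * exp (β * (s - t₀))) s := fun s hs ↦
    ((hD s hs).mul (((hasDerivAt_id s).sub_const t₀).const_mul β).exp).congr_deriv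
      (by simp only [id_eq, mul_one]; ring)
  have hWanti : AntitoneOn W (Ici t₀) := by
    refine antitoneOn_of_hasDerivWithinAt_nonpos (convex_Ici t₀)
      (f' := fun s ↦ (D' s + β * D s) * exp (β * (s - t₀)))
      (fun s hs ↦ (hW s hs).continuousAt.continuousWithinAt) (fun s hs ↦ ?_) (fun s hs ↦ ?_)
    · rw [interior_Ici] at hs
      exact (hW s (le_of_lt hs)).hasDerivWithinAt
    · rw [interior_Ici] at hs
      have := hD' s (le_of_lt hs)
      exact mul_nonpos_of_nonpos_of_nonneg (by linarith) (exp_pos _).le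
  have hWt : W t ≤ W t₀ := hWanti self_mem_Ici ht ht
  have hexp : exp (β * (t - t₀)) * exp (-β * (t - t₀)) = 1 := by
    rw [← exp_add]; simp
  calc D t = W t * exp (-β * (t - t₀)) := by simp only [W]; rw [mul_assoc, hexp, mul_one]
    _ ≤ W t₀ * exp (-β * (t - t₀)) := by gcongr
    _ = D t₀ * exp (-β * (t - t₀)) := by simp [W]

lemma le_forcedDecaySolution {V V' : ℝ → ℝ} {β γ ϖ t₀ : ℝ} (hγβ : γ ≠ β)
    (hV : ∀ t, t₀ ≤ t → HasDerivAt V (V' t) t)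
    (hineq : ∀ t, t₀ ≤ t → V' t ≤ -β * V t + ϖ * exp (-γ * (t - t₀)))
    {t : ℝ} (ht : t₀ ≤ t) : V t ≤ forcedDecaySolution β γ ϖ t₀ (V t₀) t := by
  set B := forcedDecaySolution β γ ϖ t₀ (V t₀)
  have hBt₀ : B t₀ = V t₀ := by simp [B, forcedDecaySolution]
  have := le_mul_exp_of_hasDerivAt_le (D := V - B) (β := β)
    (fun s hs ↦ (hV s hs).sub (hasDerivAt_forcedDecaySolution hγβ ϖ t₀ (V t₀) s))
    (fun s hs ↦ by have := hineq s hs; simp only [Pi.sub_apply]; linarith) ht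
  simpa [hBt₀] using this

lemma exp_sub_exp_div_sub_le (β γ τ : ℝ) :
    (exp (-γ * τ) - exp (-β * τ)) / (β - γ) ≤ exp (-(min γ β) * τ) / |β - γ| := by
  wlog hγβ : γ ≤ β generalizing β γ
  · have := this γ β (le_of_not_ge hγβ)
    rw [min_comm, abs_sub_comm] at this
    convert this using 1
    rw [← neg_div_neg_eq, neg_sub, neg_sub]
  rcases hγβ.eq_or_lt with rfl | hlt
  · simp
  rw [min_eq_left hγβ, abs_of_pos (sub_pos.mpr hlt)]
  gcongr
  linarith [exp_pos (-β * τ)]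

theorem stmt_1_general (V : ℝ → ℝ) (t0 β α ϖ : ℝ)
    (hϖ : 0 ≤ ϖ) (hne : β ≠ 2 * α)
    (hC1 : ContDiff ℝ 1 V)
    (hineq : ∀ t, t0 ≤ t → deriv V t ≤ -β * V t + ϖ * Real.exp (-2 * α * (t - t0))) :
    ∀ t, t0 ≤ t →
      V t ≤ V t0 * Real.exp (-β * (t - t0)) +
        (ϖ / |β - 2 * α|) * Real.exp (-(min (2 * α) β) * (t - t0)) := by
  intro t ht
  have hV : ∀ s, t0 ≤ s → HasDerivAt V (deriv V s) s :=
    fun s _ ↦ (hC1.differentiable one_ne_zero s).hasDerivAt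
  have hineq' : ∀ s, t0 ≤ s → deriv V s ≤ -β * V s + ϖ * exp (-(2 * α) * (s - t0)) := by
    simpa only [neg_mul] using hineq
  calc V t ≤ forcedDecaySolution β (2 * α) ϖ t0 (V t0) t :=
        le_forcedDecaySolution hne.symm hV hineq' ht
    _ = V t0 * exp (-β * (t - t0)) +
          ϖ * ((exp (-(2 * α) * (t - t0)) - exp (-β * (t - t0))) / (β - 2 * α)) := by
      unfold forcedDecaySolution; ring
    _ ≤ V t0 * exp (-β * (t - t0)) +
          ϖ * (exp (-(min (2 * α) β) * (t - t0)) / |β - 2 * α|) := by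
      gcongr _ + ϖ * ?_
      exact exp_sub_exp_div_sub_le β (2 * α) (t - t0)
    _ = _ := by ring

/-- Comparison lemma for a scalar differential inequality with an exponentially
decaying perturbation, used in the DMP stability analysis. -/
theorem stmt_1 (V : ℝ → ℝ) (t0 β α ϖ : ℝ)
    (hβ : 0 < β) (hα : 0 < α) (hϖ : 0 ≤ ϖ) (hne : β ≠ 2 * α)
    (hC1 : ContDiff ℝ 1 V)
    (hpos : ∀ t, t0 ≤ t → 0 ≤ V t)
    (hineq : ∀ t, t0 ≤ t → deriv V t ≤ -β * V t + ϖ * Real.exp (-2 * α * (t - t0))) :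
    ∀ t, t0 ≤ t →
      V t ≤ V t0 * Real.exp (-β * (t - t0)) +
        (ϖ / |β - 2 * α|) * Real.exp (-(min (2 * α) β) * (t - t0)) :=
  stmt_1_general V t0 β α ϖ hϖ hne hC1 hineq
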